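/- The subdivided star SW (each edge of K_{1,3} subdivided once) and the cycle C_6 are nonisomorphic connected graphs whose P_3-graphs are both isomorphic to C_6 and hence isomorphic to each other. -/

import Mathlib

/-- A 3-vertex path (P₃) of a simple graph `G`: a middle vertex together with an
unordered pair of distinct ends, each adjacent to the middle vertex.
This identifies the path `a-b-c` with `c-b-a`. -/
@[ext]
structure P3Path {V : Type*} (G : SimpleGraph V) where
  mid : V
  ends : Sym2 V
  not_diag : ¬ ends.IsDiag
  adj : ∀ x ∈ ends, G.Adj mid x

/-- The `P₃`-graph of `G`: two 3-vertex paths are adjacent iff their union is a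
path on 4 vertices or a cycle on 3 vertices; equivalently, the middle vertex of
each is an end of the other. -/
def P3Graph {V : Type*} (G : SimpleGraph V) : SimpleGraph (P3Path G) where
  Adj p q := p ≠ q ∧ q.mid ∈ p.ends ∧ p.mid ∈ q.ends
  symm := ⟨fun p q h => ⟨Ne.symm h.1, h.2.2, h.2.1⟩⟩
  loopless := ⟨fun p h => h.1 rfl⟩

/-- The subdivided star `SW`: `K_{1,3}` with each edge subdivided once.
Center `0`; middle vertices `1,2,3`; leaves `4,5,6`. -/
def SW : SimpleGraph (Fin 7) :=
  SimpleGraph.fromEdgeSet {s(0,1), s(0,2), s(0,3), s(1,4), s(2,5), s(3,6)}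

/-! A `P₃` of `C_n` (`n ≥ 3`) is determined by its middle vertex, whose two neighbours must be its
ends, and two `P₃`'s are adjacent exactly when their middle vertices are; so the middle vertex is an
isomorphism `P3Graph (C_n) ≃g C_n`. The six `P₃`'s of `SW` are `c b_i a_i` and `b_i c b_j`, and
alternating them as `c b₁ a₁, b₁ c b₂, c b₂ a₂, b₂ c b₃, c b₃ a₃, b₃ c b₁` runs around a 6-cycle
of `P3Graph SW`. Finally, `SW` has seven vertices and `C₆` only six. -/

open SimpleGraph

namespace P3Path

variable {V : Type*} {G : SimpleGraph V}

theorem exists_ends_eq (p : P3Path G) :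
    ∃ x y, x ≠ y ∧ G.Adj p.mid x ∧ G.Adj p.mid y ∧ p.ends = s(x, y) := by
  obtain ⟨m, e, hdiag, hadj⟩ := p
  induction e using Sym2.ind with
  | _ x y => exact ⟨x, y, by simpa using hdiag, hadj x (by simp), hadj y (by simp), rfl⟩

theorem adj_mid_of_p3Graph_adj {p q : P3Path G} (h : (P3Graph G).Adj p q) :
    G.Adj p.mid q.mid :=
  p.adj _ h.2.1

end P3Path

theorem Fin.sub_one_ne_add_one {n : ℕ} (v : Fin (n + 3)) : v - 1 ≠ v + 1 := by
  rw [ne_eq, sub_eq_iff_eq_add, add_assoc, left_eq_add, Fin.ext_iff]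
  simp [Fin.val_add, Nat.mod_eq_of_lt]

section CycleGraph

variable {n : ℕ}

theorem SimpleGraph.cycleGraph_adj_iff_eq_sub_one_or_eq_add_one {u v : Fin (n + 2)} :
    (cycleGraph (n + 2)).Adj u v ↔ v = u - 1 ∨ v = u + 1 := by
  rw [← mem_neighborSet, cycleGraph_neighborSet]
  rfl

theorem P3Path.ends_eq_of_cycleGraph (p : P3Path (cycleGraph (n + 3))) :
    p.ends = s(p.mid - 1, p.mid + 1) := by
  obtain ⟨x, y, hxy, hx, hy, he⟩ := p.exists_ends_eq
  rw [he]
  rw [cycleGraph_adj_iff_eq_sub_one_or_eq_add_one] at hx hy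
  rcases hx with rfl | rfl <;> rcases hy with rfl | rfl
  · exact absurd rfl hxy
  · rfl
  · exact Sym2.eq_swap
  · exact absurd rfl hxy

theorem P3Path.mem_ends_iff_of_cycleGraph (p : P3Path (cycleGraph (n + 3))) (v : Fin (n + 3)) :
    v ∈ p.ends ↔ (cycleGraph (n + 3)).Adj p.mid v := by
  rw [p.ends_eq_of_cycleGraph, Sym2.mem_iff, cycleGraph_adj_iff_eq_sub_one_or_eq_add_one]

theorem P3Path.mid_injective_of_cycleGraph :
    Function.Injective (P3Path.mid : P3Path (cycleGraph (n + 3)) → Fin (n + 3)) :=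
  fun p q h => P3Path.ext h (by rw [p.ends_eq_of_cycleGraph, q.ends_eq_of_cycleGraph, h])

def P3Path.ofCycleGraph (v : Fin (n + 3)) : P3Path (cycleGraph (n + 3)) where
  mid := v
  ends := s(v - 1, v + 1)
  not_diag := by simpa using Fin.sub_one_ne_add_one v
  adj x hx := by
    rw [cycleGraph_adj_iff_eq_sub_one_or_eq_add_one]
    simpa using hx

def p3GraphCycleGraphIso : P3Graph (cycleGraph (n + 3)) ≃g cycleGraph (n + 3) where
  toFun := P3Path.mid
  invFun := P3Path.ofCycleGraph
  left_inv _ := P3Path.mid_injective_of_cycleGraph rfl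
  right_inv _ := rfl
  map_rel_iff' {p q} :=
    ⟨fun h => ⟨fun hpq => h.ne (congrArg _ hpq), (p.mem_ends_iff_of_cycleGraph _).2 h,
        (q.mem_ends_iff_of_cycleGraph _).2 h.symm⟩,
      P3Path.adj_mid_of_p3Graph_adj⟩

end CycleGraph

instance : DecidableRel SW.Adj := by unfold SW; infer_instance

def swPath : Fin 6 → P3Path SW
  | 0 => ⟨1, s(0, 4), by decide, by decide⟩
  | 1 => ⟨0, s(1, 2), by decide, by decide⟩
  | 2 => ⟨2, s(0, 5), by decide, by decide⟩
  | 3 => ⟨0, s(2, 3), by decide, by decide⟩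
  | 4 => ⟨3, s(0, 6), by decide, by decide⟩
  | 5 => ⟨0, s(3, 1), by decide, by decide⟩

theorem swPath_injective : Function.Injective swPath := by
  have h : ∀ i j, (swPath i).mid = (swPath j).mid → (swPath i).ends = (swPath j).ends → i = j := by
    decide
  exact fun i j hij => h i j (congrArg _ hij) (congrArg _ hij)

theorem swPath_surjective : Function.Surjective swPath := by
  have h : ∀ m x y, x ≠ y → SW.Adj m x → SW.Adj m y →
      ∃ i, (swPath i).mid = m ∧ (swPath i).ends = s(x, y) := by
    decide
  intro p
  obtain ⟨x, y, hxy, hx, hy, he⟩ := p.exists_ends_eq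
  obtain ⟨i, hm, hi⟩ := h _ x y hxy hx hy
  exact ⟨i, P3Path.ext hm (hi.trans he.symm)⟩

theorem cycleGraph_six_adj_iff_swPath_adj (i j : Fin 6) :
    (cycleGraph 6).Adj i j ↔ (P3Graph SW).Adj (swPath i) (swPath j) := by
  have h : ∀ i j, (cycleGraph 6).Adj i j ↔
      i ≠ j ∧ (swPath j).mid ∈ (swPath i).ends ∧ (swPath i).mid ∈ (swPath j).ends := by
    decide
  rw [h, ← swPath_injective.ne_iff]
  rfl

noncomputable def p3GraphSWIso : P3Graph SW ≃g cycleGraph 6 :=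
  RelIso.symm
    { toEquiv := Equiv.ofBijective swPath ⟨swPath_injective, swPath_surjective⟩
      map_rel_iff' := (cycleGraph_six_adj_iff_swPath_adj _ _).symm }

/-- `SW` and `C₆` are nonisomorphic connected graphs whose `P₃`-graphs are both
isomorphic to `C₆`, hence isomorphic to each other. -/
theorem SW_C6_noniso_same_P3 :
    ¬ Nonempty (SW ≃g SimpleGraph.cycleGraph 6) ∧
    SW.Connected ∧ (SimpleGraph.cycleGraph 6).Connected ∧
    Nonempty (P3Graph SW ≃g SimpleGraph.cycleGraph 6) ∧
    Nonempty (P3Graph (SimpleGraph.cycleGraph 6) ≃g SimpleGraph.cycleGraph 6) ∧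
    Nonempty (P3Graph SW ≃g P3Graph (SimpleGraph.cycleGraph 6)) := by
  refine ⟨fun ⟨e⟩ => ?_, by decide, cycleGraph_connected, ⟨p3GraphSWIso⟩,
    ⟨p3GraphCycleGraphIso⟩, ⟨p3GraphSWIso.trans p3GraphCycleGraphIso.symm⟩⟩
  simpa using Fintype.card_congr e.toEquiv
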